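/- arXiv:math/0505415 — 3 statements merged into one kernel-verified Lean document; each statement's English description precedes it below -/
import Mathlib

section
/- For all integers 0 ≤ t ≤ k, every graph G on n vertices with treewidth at most k contains a set S of at least (t+1)·n/(k+1) vertices such that the induced subgraph G[S] has treewidth at most t. -/
/-- The degree of a vertex `v` in `G` (number of neighbours). -/
noncomputable def degN {V : Type*} (G : SimpleGraph V) (v : V) : ℕ :=
  (G.neighborSet v).ncard

/-- `G` is a `k`-tree. This encodes the recursive definition (start with a `(k+1)`-clique and
repeatedly add a new vertex adjacent to exactly the vertices of an existing `k`-clique) via a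
construction ordering `e : V ≃ Fin n`: the first `k+1` vertices form a clique, and every later
vertex is adjacent among the earlier vertices to exactly the `k` vertices of a clique `S`. -/
def IsKTree {V : Type*} (k : ℕ) (G : SimpleGraph V) : Prop :=
  ∃ (n : ℕ) (e : V ≃ Fin n),
    k + 1 ≤ n ∧
    (∀ i j : Fin n, i < j → (j : ℕ) < k + 1 → G.Adj (e.symm i) (e.symm j)) ∧
    (∀ j : Fin n, k + 1 ≤ (j : ℕ) →
      ∃ S : Finset (Fin n), S.card = k ∧ (∀ i ∈ S, i < j) ∧
        (∀ i : Fin n, i < j → (G.Adj (e.symm i) (e.symm j) ↔ i ∈ S)) ∧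
        (∀ i ∈ S, ∀ i' ∈ S, i ≠ i' → G.Adj (e.symm i) (e.symm i')))

/-- The treewidth of a graph `G`: the minimum `k` such that `G` is a spanning subgraph
of a `k`-tree. -/
noncomputable def treewidth {V : Type*} (G : SimpleGraph V) : ℕ :=
  sInf {k : ℕ | ∃ H : SimpleGraph V, IsKTree k H ∧ G ≤ H}

/-!
Let `H ≥ G` be a `k'`-tree, `k' = treewidth G ≤ k`. Colouring `H` greedily along its
construction order gives a proper `(k' + 1)`-colouring in which the `k'` earlier neighbours of
every later vertex carry all colours but its own. Keep the `s + 1` heaviest colour classes,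
`s = min t k'`: they contain at least a `(s + 1) / (k' + 1)` fraction of the vertices, and `H`
induces an `s`-tree on them, since the first `s + 1` of them lie in the initial clique and every
later one keeps exactly `s` of its earlier neighbours, which still form a clique.
-/

open Finset

theorem Finset.exists_card_eq_mul_sum_le {α : Type*} [Fintype α] [DecidableEq α] (w : α → ℕ)
    {r : ℕ} (hr : r ≤ Fintype.card α) :
    ∃ T : Finset α, #T = r ∧ r * ∑ a, w a ≤ Fintype.card α * ∑ a ∈ T, w a := by
  induction hr using Nat.decreasingInduction with
  | self => exact ⟨univ, card_univ, le_rfl⟩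
  | of_succ r _ ih =>
    obtain ⟨T, hT, hsum⟩ := ih
    -- removing a lightest element of `T` keeps at least its average share
    obtain ⟨y, hyT, hy⟩ := T.exists_min_image w (card_pos.mp (by omega))
    have hy_le : (r + 1) * w y ≤ ∑ a ∈ T, w a := by
      simpa [hT] using T.card_nsmul_le_sum w (w y) hy
    have hsplit := sum_erase_add T w hyT
    refine ⟨T.erase y, by rw [card_erase_of_mem hyT, hT]; rfl, ?_⟩
    refine le_of_mul_le_mul_left (a := r + 1) ?_ (Nat.succ_pos r)
    rw [← hsplit] at hsum hy_le
    nlinarith [Nat.mul_le_mul_left (Fintype.card α) hy_le, Nat.mul_le_mul_left r hsum]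

theorem SimpleGraph.colorable_of_card_earlier_neighbors_le {W : Type*} [Fintype W]
    (G : SimpleGraph W) [DecidableRel G.Adj] {k : ℕ} (r : W → ℕ) (hr : Function.Injective r)
    (h : ∀ v, #{u | r u < r v ∧ G.Adj u v} ≤ k) : G.Colorable (k + 1) := by
  classical
  suffices ∃ c : W → Fin (k + 1), ∀ u ∈ (univ : Finset W), ∀ v ∈ (univ : Finset W),
      G.Adj u v → c u ≠ c v by
    obtain ⟨c, hc⟩ := this
    exact ⟨.mk c fun huv => hc _ (mem_univ _) _ (mem_univ _) huv⟩
  induction (univ : Finset W) using Finset.induction_on_max_value r with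
  | empty => exact ⟨fun _ => 0, by simp⟩
  | insert a s ha hmax ih =>
    obtain ⟨c, hc⟩ := ih
    have hlt : ∀ u ∈ s, r u < r a := fun u hu =>
      (hmax u hu).lt_of_ne (hr.ne (ne_of_mem_of_not_mem hu ha))
    obtain ⟨b, hb⟩ : ∃ b : Fin (k + 1), b ∉ ({u ∈ s | G.Adj u a} : Finset W).image c := by
      by_contra! hall
      have : #(univ : Finset (Fin (k + 1))) ≤ #{u | r u < r a ∧ G.Adj u a} :=
        (card_le_card fun b _ => hall b).trans <| card_image_le.trans <|
          card_le_card fun u hu => by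
            simp only [mem_filter, mem_univ, true_and] at hu ⊢
            exact ⟨hlt u hu.1, hu.2⟩
      simpa using this.trans (h a)
    refine ⟨Function.update c a b, ?_⟩
    simp only [mem_insert]
    rintro u (rfl | hu) v (rfl | hv) huv
    · exact absurd huv G.irrefl
    · rw [Function.update_self, Function.update_of_ne (ne_of_mem_of_not_mem hv ha)]
      exact fun hbv => hb (mem_image.mpr ⟨v, by simpa [hv] using huv.symm, hbv.symm⟩)
    · rw [Function.update_self, Function.update_of_ne (ne_of_mem_of_not_mem hu ha)]
      exact fun hbu => hb (mem_image.mpr ⟨u, by simpa [hu] using huv, hbu⟩)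
    · rw [Function.update_of_ne (ne_of_mem_of_not_mem hu ha),
        Function.update_of_ne (ne_of_mem_of_not_mem hv ha)]
      exact hc u hu v hv huv

theorem Finset.card_filter_coe_sort {W : Type*} (S : Finset W) (p : W → Prop) [DecidablePred p] :
    #{w : (S : Set W) | p w} = #{w ∈ S | p w} := by
  rw [← card_map (Function.Embedding.subtype _)]
  congr 1; ext; simp [and_comm]

namespace SimpleGraph.Coloring

variable {W α : Type*} {G : SimpleGraph W}

theorem injOn_of_isClique (C : G.Coloring α) {s : Set W} (hs : G.IsClique s) : s.InjOn C :=
  fun _ hx _ hy hxy => by_contra fun hne => C.valid (hs hx hy hne) hxy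

theorem card_filter_mem_of_isClique [DecidableEq α] (C : G.Coloring α) {s : Finset W}
    (hs : G.IsClique (s : Set W)) (T : Finset α) :
    #{x ∈ s | C x ∈ T} = #(s.image C ∩ T) := by
  rw [← card_image_of_injOn ((C.injOn_of_isClique hs).mono (coe_subset.mpr (filter_subset _ _))),
    ← filter_image (p := (· ∈ T)), filter_mem_eq_inter]

variable {k : ℕ} (C : G.Coloring (Fin (k + 1))) {s : Finset W}

theorem image_eq_univ_of_isNClique (hs : G.IsNClique (k + 1) s) : s.image C = univ :=
  eq_univ_of_card _ <| by
    rw [card_image_of_injOn (C.injOn_of_isClique hs.isClique), hs.card_eq, Fintype.card_fin]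

theorem image_eq_erase_of_isNClique_of_adj {v : W} (hs : G.IsNClique k s)
    (hadj : ∀ u ∈ s, G.Adj u v) : s.image C = univ.erase (C v) := by
  refine eq_of_subset_of_card_le (fun a ha => ?_) ?_
  · obtain ⟨u, hu, rfl⟩ := mem_image.mp ha
    exact mem_erase.mpr ⟨C.valid (hadj u hu), mem_univ _⟩
  · rw [card_image_of_injOn (C.injOn_of_isClique hs.isClique), hs.card_eq,
      card_erase_of_mem (mem_univ _), card_univ, Fintype.card_fin, Nat.add_sub_cancel]

end SimpleGraph.Coloring

section Ranking

variable {W : Type*} [Fintype W]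

theorem card_filter_lt_equiv_fin {n : ℕ} (e : W ≃ Fin n) (v : W) :
    #{w | e w < e v} = e v := by
  rw [card_equiv e (t := {i | i < e v}) (by simp), ← Fin.card_Iio]
  congr 1; ext; simp

theorem card_filter_lt_mono (r : W → ℕ) {u v : W} (h : r u ≤ r v) :
    #{w | r w < r u} ≤ #{w | r w < r v} :=
  card_le_card fun w => by simp only [mem_filter, mem_univ, true_and]; omega

theorem exists_equiv_fin_lt_iff {r : W → ℕ} (hr : Function.Injective r) :
    ∃ e : W ≃ Fin (Fintype.card W), ∀ u v, e u < e v ↔ r u < r v := by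
  let _ : LinearOrder W := LinearOrder.lift' r hr
  let e := (Fintype.orderIsoFinOfCardEq W rfl).symm
  exact ⟨e.toEquiv, fun _ _ => e.lt_iff_lt⟩

/-- A construction order of a `k`-tree given by an injective rank. Unlike the ordering
`V ≃ Fin n` in `IsKTree`, it restricts to induced subgraphs by composing with the inclusion. -/
structure IsKTreeRanking (k : ℕ) (G : SimpleGraph W) (r : W → ℕ) : Prop where
  injective : Function.Injective r
  succ_le_card : k + 1 ≤ Fintype.card W
  adj_of_lt : ∀ ⦃u v⦄, r u < r v → #{w | r w < r v} ≤ k → G.Adj u v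
  exists_isNClique : ∀ v, k < #{w | r w < r v} →
    ∃ S : Finset W, G.IsNClique k S ∧ ∀ u, u ∈ S ↔ r u < r v ∧ G.Adj u v

theorem IsKTree.exists_isKTreeRanking {k : ℕ} {G : SimpleGraph W} (hG : IsKTree k G) :
    ∃ r : W → ℕ, IsKTreeRanking k G r := by
  obtain ⟨n, e, hkn, hfirst, hlater⟩ := hG
  have hcnt (v : W) : #{w | (e w : ℕ) < e v} = e v := card_filter_lt_equiv_fin e v
  refine ⟨fun v => e v, ⟨Fin.val_injective.comp e.injective, ?_, ?_, ?_⟩⟩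
  · simpa [Fintype.card_congr e] using hkn
  · intro u v huv hv
    simpa using hfirst (e u) (e v) huv (by rw [hcnt] at hv; omega)
  · intro v hv
    obtain ⟨S, hS, hlt, hadj, hclique⟩ := hlater (e v) (by rw [hcnt] at hv; omega)
    refine ⟨S.map e.symm.toEmbedding, ⟨?_, by simpa using hS⟩, fun u => ?_⟩
    · intro x hx y hy hxy
      simpa using hclique _ (by simpa using hx) _ (by simpa using hy) (e.injective.ne hxy)
    · have := hadj (e u)
      simp only [Equiv.symm_apply_apply] at this
      simp only [mem_map_equiv, Equiv.symm_symm]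
      exact ⟨fun hu => ⟨hlt _ hu, (this (hlt _ hu)).2 hu⟩,
        fun ⟨hlt', hadj'⟩ => (this hlt').1 hadj'⟩

theorem IsKTreeRanking.isKTree {k : ℕ} {G : SimpleGraph W} {r : W → ℕ}
    (h : IsKTreeRanking k G r) : IsKTree k G := by
  obtain ⟨e, he⟩ := exists_equiv_fin_lt_iff h.injective
  have hcnt (v : W) : #{w | r w < r v} = e v := by
    simp_rw [← he, card_filter_lt_equiv_fin]
  refine ⟨_, e, h.succ_le_card, fun i j hij hj => ?_, fun j hj => ?_⟩
  · simpa using h.adj_of_lt ((he _ _).1 (by simpa using hij)) (by rw [hcnt]; simp; omega)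
  · obtain ⟨S, ⟨hclique, hS⟩, hmem⟩ :=
      h.exists_isNClique (e.symm j) (by rw [hcnt]; simp; omega)
    have hmem' (i : Fin _) :
        i ∈ S.map e.toEmbedding ↔ i < j ∧ G.Adj (e.symm i) (e.symm j) := by
      simp [mem_map_equiv, hmem, ← he]
    refine ⟨S.map e.toEmbedding, by simpa using hS, fun i hi => ((hmem' i).1 hi).1,
      fun i hi => ((hmem' i).trans (and_iff_right hi)).symm, fun i hi i' hi' hii' => ?_⟩
    rw [mem_map_equiv] at hi hi'
    exact hclique hi hi' (e.symm.injective.ne hii')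

namespace IsKTreeRanking

variable {k : ℕ} {G : SimpleGraph W} {r : W → ℕ}

theorem isNClique_initial (h : IsKTreeRanking k G r) :
    G.IsNClique (k + 1) {v | #{w | r w < r v} ≤ k} := by
  refine ⟨fun u hu v hv huv => ?_, ?_⟩
  · replace hu := (mem_filter.mp (mem_coe.mp hu)).2
    replace hv := (mem_filter.mp (mem_coe.mp hv)).2
    rcases (h.injective.ne huv).lt_or_gt with huv | hvu
    · exact h.adj_of_lt huv hv
    · exact (h.adj_of_lt hvu hu).symm
  obtain ⟨e, he⟩ := exists_equiv_fin_lt_iff h.injective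
  have hcnt (v : W) : #{w | r w < r v} = e v := by
    simp_rw [← he, card_filter_lt_equiv_fin]
  simp_rw [hcnt]
  rw [card_equiv e (t := ({i | (i : ℕ) < k + 1} : Finset (Fin (Fintype.card W)))) (by simp),
    Fin.card_filter_val_lt, min_eq_right h.succ_le_card]

theorem colorable (h : IsKTreeRanking k G r) : G.Colorable (k + 1) := by
  classical
  refine G.colorable_of_card_earlier_neighbors_le r h.injective fun v => ?_
  by_cases hv : #{w | r w < r v} ≤ k
  · exact (card_le_card fun u => by simp +contextual).trans hv
  · obtain ⟨S, hS, hmem⟩ := h.exists_isNClique v (not_le.mp hv)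
    rw [← hS.card_eq]
    exact card_le_card fun u => by simp [hmem]

theorem card_filter_initial_mem (h : IsKTreeRanking k G r) (C : G.Coloring (Fin (k + 1)))
    (T : Finset (Fin (k + 1))) : #{u | #{w | r w < r u} ≤ k ∧ C u ∈ T} = #T := by
  rw [← filter_filter, C.card_filter_mem_of_isClique h.isNClique_initial.isClique,
    C.image_eq_univ_of_isNClique h.isNClique_initial, univ_inter]

/-- Among the vertices coloured in `T`, the first `s + 1` are those of the initial clique. -/
theorem card_filter_lt_le_iff (h : IsKTreeRanking k G r) (C : G.Coloring (Fin (k + 1)))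
    {s : ℕ} {T : Finset (Fin (k + 1))} (hT : #T = s + 1) {v : W} (hv : C v ∈ T) :
    #{w | C w ∈ T ∧ r w < r v} ≤ s ↔ #{w | r w < r v} ≤ k := by
  classical
  set I : Finset W := {u | #{w | r w < r u} ≤ k ∧ C u ∈ T}
  have hIT : #I = s + 1 := (h.card_filter_initial_mem C T).trans hT
  constructor
  · intro hle
    by_contra! hlt
    have hsub : I ⊆ ({w | C w ∈ T ∧ r w < r v} : Finset W) := fun u hu => by
      simp only [I, mem_filter, mem_univ, true_and] at hu ⊢
      exact ⟨hu.2, not_le.mp fun hvu => (card_filter_lt_mono r hvu).not_gt (hu.1.trans_lt hlt)⟩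
    have := card_le_card hsub
    omega
  · intro hle
    have hsub : ({w | C w ∈ T ∧ r w < r v} : Finset W) ⊆ I.erase v := fun w hw => by
      simp only [I, mem_erase, mem_filter, mem_univ, true_and] at hw ⊢
      exact ⟨(h.injective.ne_iff.mp hw.2.ne), (card_filter_lt_mono r hw.2.le).trans hle, hw.1⟩
    have := card_le_card hsub
    rw [card_erase_of_mem (by simp [I, hle, hv]), hIT] at this
    omega

theorem induce_coloring_preimage (h : IsKTreeRanking k G r) (C : G.Coloring (Fin (k + 1)))
    {s : ℕ} {T : Finset (Fin (k + 1))} (hT : #T = s + 1) :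
    IsKTreeRanking s (G.induce ({v | C v ∈ T} : Finset W)) (fun v => r v) := by
  set S : Finset W := {v | C v ∈ T}
  have hcnt (v : W) : #{w : (S : Set W) | r w < r v} = #{w | C w ∈ T ∧ r w < r v} := by
    rw [card_filter_coe_sort S (fun w => r w < r v), filter_filter]
  refine ⟨h.injective.comp Subtype.val_injective, ?_, fun u v huv hv => ?_, fun v hv => ?_⟩
  · simp only [coe_sort_coe, Fintype.card_coe]
    rw [← hT, ← h.card_filter_initial_mem C T]
    exact card_le_card (monotone_filter_right _ fun _ _ hu => hu.2)
  · rw [hcnt, h.card_filter_lt_le_iff C hT (mem_filter.mp v.2).2] at hv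
    exact h.adj_of_lt huv hv
  · rw [hcnt, ← not_le, h.card_filter_lt_le_iff C hT (mem_filter.mp v.2).2, not_le] at hv
    obtain ⟨N, hN, hmem⟩ := h.exists_isNClique v hv
    classical
    refine ⟨N.subtype (· ∈ S), ⟨fun u hu w hw huw => ?_, ?_⟩, fun u => ?_⟩
    · exact hN.isClique (mem_subtype.mp hu) (mem_subtype.mp hw) (Subtype.val_injective.ne huw)
    · have hadj (u) (hu : u ∈ N) : G.Adj u v := ((hmem u).mp hu).2
      rw [card_subtype, filter_congr fun u _ => mem_filter_univ (x := u),
        C.card_filter_mem_of_isClique hN.isClique, C.image_eq_erase_of_isNClique_of_adj hN hadj,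
        erase_inter, univ_inter, card_erase_of_mem (mem_filter.mp v.2).2, hT, Nat.add_sub_cancel]
    · exact mem_subtype.trans (hmem u)

end IsKTreeRanking

theorem IsKTree.exists_large_induce_isKTree {k s : ℕ} {G : SimpleGraph W} (hG : IsKTree k G)
    (hs : s ≤ k) :
    ∃ S : Finset W, (s + 1) * Fintype.card W ≤ (k + 1) * #S ∧
      IsKTree s (G.induce (S : Set W)) := by
  obtain ⟨r, hr⟩ := hG.exists_isKTreeRanking
  let C := hr.colorable.some
  obtain ⟨T, hT, hsum⟩ := exists_card_eq_mul_sum_le (fun a => #{v | C v = a})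
    (r := s + 1) (by simpa using hs)
  refine ⟨({v | C v ∈ T} : Finset W), ?_, (hr.induce_coloring_preimage C hT).isKTree⟩
  rwa [sum_card_fiberwise_eq_card_filter, sum_card_fiberwise_eq_card_filter, Fintype.card_fin,
    filter_true_of_mem fun _ _ => mem_univ _, card_univ] at hsum

theorem isKTree_top [Nonempty W] : IsKTree (Fintype.card W - 1) (⊤ : SimpleGraph W) := by
  have := Fintype.card_pos (α := W)
  refine ⟨_, Fintype.equivFin W, by omega, fun i j hij _ => ?_, fun j hj => by omega⟩
  exact (Fintype.equivFin W).symm.injective.ne hij.ne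

theorem exists_isKTree_treewidth [Nonempty W] (G : SimpleGraph W) :
    ∃ H : SimpleGraph W, IsKTree (treewidth G) H ∧ G ≤ H :=
  Nat.sInf_mem (s := {k | ∃ H : SimpleGraph W, IsKTree k H ∧ G ≤ H})
    ⟨_, ⊤, isKTree_top, le_top⟩

end Ranking

theorem treewidth_le_of_isKTree {V : Type*} {k : ℕ} {G H : SimpleGraph V} (hH : IsKTree k H)
    (hGH : G ≤ H) : treewidth G ≤ k :=
  Nat.sInf_le ⟨H, hH, hGH⟩

theorem treewidth_eq_zero_of_isEmpty {V : Type*} [IsEmpty V] (G : SimpleGraph V) :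
    treewidth G = 0 := by
  refine Nat.sInf_eq_zero.mpr (.inr (Set.eq_empty_of_forall_notMem ?_))
  rintro k ⟨H, ⟨n, e, hkn, -⟩, -⟩
  exact isEmptyElim (e.symm ⟨0, by omega⟩)

/-- For integers `0 ≤ t ≤ k`, every graph `G` on `n` vertices with treewidth
at most `k` contains a set `S` of at least `(t+1)·n/(k+1)` vertices such that the induced
subgraph `G[S]` has treewidth at most `t`. -/
theorem stmt4 {V : Type*} [Fintype V] (t k : ℕ) (htk : t ≤ k)
    (G : SimpleGraph V) (htw : treewidth G ≤ k) :
    ∃ S : Finset V,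
      ((t + 1 : ℝ) * Fintype.card V / (k + 1) ≤ S.card) ∧
      treewidth (G.induce (S : Set V)) ≤ t := by
  rcases isEmpty_or_nonempty V with hV | hV
  · exact ⟨∅, by simp, (treewidth_eq_zero_of_isEmpty _).trans_le t.zero_le⟩
  obtain ⟨H, hH, hGH⟩ := exists_isKTree_treewidth G
  obtain ⟨S, hcard, hS⟩ := hH.exists_large_induce_isKTree (min_le_right t (treewidth G))
  refine ⟨S, ?_, (treewidth_le_of_isKTree hS (SimpleGraph.comap_monotone _ hGH)).trans
    (min_le_left _ _)⟩
  have hnat : (t + 1) * Fintype.card V ≤ (k + 1) * #S := by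
    rcases le_total t (treewidth G) with h | h
    · rw [min_eq_left h] at hcard
      nlinarith
    · rw [min_eq_right h] at hcard
      have := Nat.le_of_mul_le_mul_left hcard (Nat.succ_pos _)
      nlinarith
  rw [div_le_iff₀ (by positivity)]
  exact_mod_cast (by linarith : (t + 1) * Fintype.card V ≤ #S * (k + 1))
end

section
/- Let G be a k-tree on n vertices, and let C = (u_1, u_2, …, u_q) be a clique of G ordered by degree. If n ≥ k+q then deg_G(u_i) ≥ k+i-1 for all 1 ≤ i ≤ q. Otherwise n ≤ k+q-1, and deg_G(u_i) ≥ k+i-1 for 1 ≤ i ≤ n-k-1, while deg_G(u_i) ≥ n-1 for n-k ≤ i ≤ q. -/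
open Finset

variable {n k m : ℕ}

/-- The conditions of `IsKTree` for the identity ordering of `Fin n`. -/
structure IsKTreeOrder (k : ℕ) (H : SimpleGraph (Fin n)) : Prop where
  adj_of_lt : ∀ i j : Fin n, i < j → (j : ℕ) < k + 1 → H.Adj i j
  exists_parent_clique : ∀ j : Fin n, k + 1 ≤ (j : ℕ) →
    ∃ S : Finset (Fin n), #S = k ∧ (∀ i ∈ S, i < j) ∧
      (∀ i < j, H.Adj i j ↔ i ∈ S) ∧ H.IsClique (S : Set (Fin n))

lemma IsKTree.exists_isKTreeOrder {V : Type*} {G : SimpleGraph V} (hG : IsKTree k G) :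
    ∃ (n : ℕ) (e : V ≃ Fin n), k + 1 ≤ n ∧ IsKTreeOrder k (G.comap e.symm) := by
  obtain ⟨n, e, hkn, hbase, hstep⟩ := hG
  refine ⟨n, e, hkn, hbase, fun j hj => ?_⟩
  obtain ⟨S, hS, hlt, hadj, hcl⟩ := hstep j hj
  exact ⟨S, hS, hlt, hadj, fun i hi i' hi' hne => hcl i hi i' hi' hne⟩

namespace SimpleGraph

variable {H : SimpleGraph (Fin n)} [DecidableRel H.Adj]

variable (H) in
def prefixDegree (m : ℕ) (i : Fin n) : ℕ :=
  #{j : Fin n | (j : ℕ) < m ∧ H.Adj i j}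

lemma card_le_prefixDegree {i : Fin n} {T : Finset (Fin n)}
    (hT : ∀ t ∈ T, (t : ℕ) < m ∧ H.Adj i t) : #T ≤ H.prefixDegree m i :=
  card_le_card fun t ht => mem_filter.mpr ⟨mem_univ _, hT t ht⟩

lemma prefixDegree_mono {m' : ℕ} (h : m ≤ m') (i : Fin n) :
    H.prefixDegree m i ≤ H.prefixDegree m' i :=
  card_le_prefixDegree fun j hj => by
    simp only [mem_filter, mem_univ, true_and] at hj
    exact ⟨hj.1.trans_le h, hj.2⟩

lemma prefixDegree_succ_of_adj {i : Fin n} (hm : m < n) (hadj : H.Adj i ⟨m, hm⟩) :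
    H.prefixDegree m i + 1 ≤ H.prefixDegree (m + 1) i := by
  have hnot : (⟨m, hm⟩ : Fin n) ∉ ({j | (j : ℕ) < m ∧ H.Adj i j} : Finset (Fin n)) := by
    simp
  rw [prefixDegree, ← card_insert_of_notMem hnot]
  refine card_le_prefixDegree fun j hj => ?_
  rcases mem_insert.mp hj with rfl | hj
  · exact ⟨m.lt_succ_self, hadj⟩
  · simp only [mem_filter, mem_univ, true_and] at hj
    exact ⟨hj.1.trans m.lt_succ_self, hj.2⟩

lemma card_filter_val_lt_erase {i : Fin n} (hi : (i : ℕ) < m) (hm : m ≤ n) :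
    #(({j | (j : ℕ) < m} : Finset (Fin n)).erase i) = m - 1 := by
  rw [card_erase_of_mem (by simpa using hi), Fin.card_filter_val_lt, min_eq_right hm]

lemma adj_of_le_prefixDegree {i j : Fin n} (hi : (i : ℕ) < m) (hm : m ≤ n)
    (hdeg : m - 1 ≤ H.prefixDegree m i) (hj : (j : ℕ) < m) (hji : j ≠ i) : H.Adj i j := by
  have hsub : ({j | (j : ℕ) < m ∧ H.Adj i j} : Finset (Fin n)) ⊆
      ({j | (j : ℕ) < m} : Finset (Fin n)).erase i := fun j hj => by
    simp only [mem_filter, mem_univ, true_and] at hj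
    simpa [hj.1] using hj.2.ne'
  have heq := eq_of_subset_of_card_le hsub
    (by rwa [card_filter_val_lt_erase hi hm, ← prefixDegree])
  have hmem : j ∈ ({j | (j : ℕ) < m} : Finset (Fin n)).erase i := by simp [hj, hji]
  rw [← heq] at hmem
  exact (mem_filter.mp hmem).2.2

variable (H) in
def CliqueDegreeBound (k m : ℕ) : Prop :=
  ∀ W : Finset (Fin n), W.Nonempty → (∀ w ∈ W, (w : ℕ) < m) →
    H.IsClique (W : Set (Fin n)) → ∃ w ∈ W, min (k + #W - 1) (m - 1) ≤ H.prefixDegree m w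

lemma CliqueDegreeBound.card_filter_prefixDegree_lt (h : H.CliqueDegreeBound k m) (hkm : k < m)
    {W : Finset (Fin n)} (hW : ∀ w ∈ W, (w : ℕ) < m) (hcl : H.IsClique (W : Set (Fin n))) :
    #{w ∈ W | H.prefixDegree m w < m - 1} < m - k := by
  by_contra! hcon
  obtain ⟨B, hB, hBcard⟩ := exists_subset_card_eq hcon
  have hBW : B ⊆ W := hB.trans (filter_subset _ _)
  obtain ⟨w, hwB, hw⟩ := h B (card_pos.mp (by omega)) (fun w hw => hW w (hBW hw))
    (hcl.subset (coe_subset.mpr hBW))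
  have := (mem_filter.mp (hB hwB)).2
  rw [hBcard] at hw
  omega

end SimpleGraph

namespace IsKTreeOrder

variable {H : SimpleGraph (Fin n)}

lemma card_le_of_isClique (hT : IsKTreeOrder k H) {W : Finset (Fin n)}
    (hW : H.IsClique (W : Set (Fin n))) : #W ≤ k + 1 := by
  rcases W.eq_empty_or_nonempty with rfl | hne
  · simp
  set v := W.max' hne
  have hvW : v ∈ W := W.max'_mem hne
  by_cases hv : k + 1 ≤ (v : ℕ)
  · obtain ⟨S, hS, -, hadj, -⟩ := hT.exists_parent_clique v hv
    have hsub : W.erase v ⊆ S := fun w hw => by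
      obtain ⟨hwv, hwW⟩ := mem_erase.mp hw
      exact (hadj w (lt_of_le_of_ne (W.le_max' w hwW) hwv)).mp (hW hwW hvW hwv)
    have := card_le_card hsub
    have := card_erase_add_one hvW
    omega
  · calc #W ≤ #({j : Fin n | (j : ℕ) < k + 1} : Finset (Fin n)) := card_le_card fun w hw => by
          have := Fin.le_iff_val_le_val.mp (W.le_max' w hw)
          simp only [mem_filter, mem_univ, true_and]
          omega
      _ ≤ k + 1 := by rw [Fin.card_filter_val_lt]; exact min_le_right _ _

variable [DecidableRel H.Adj]

lemma mem_or_mem_of_le_prefixDegree (hT : IsKTreeOrder k H) (hm : m ≤ n) {S : Finset (Fin n)}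
    (hS : #S = k) (hSm : ∀ s ∈ S, (s : ℕ) < m) (hScl : H.IsClique (S : Set (Fin n)))
    {a b : Fin n} (hab : a ≠ b) (ha : (a : ℕ) < m) (hb : (b : ℕ) < m)
    (hadeg : m - 1 ≤ H.prefixDegree m a) (hbdeg : m - 1 ≤ H.prefixDegree m b) :
    a ∈ S ∨ b ∈ S := by
  by_contra! h
  have hcl : H.IsClique (insert a (insert b S) : Finset (Fin n)) := by
    rw [coe_insert, coe_insert, SimpleGraph.isClique_insert, SimpleGraph.isClique_insert]
    refine ⟨⟨hScl, fun s hs hbs => ?_⟩, fun c hc hac => ?_⟩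
    · exact SimpleGraph.adj_of_le_prefixDegree hb hm hbdeg (hSm s hs) (Ne.symm hbs)
    · have hcm : (c : ℕ) < m := by
        rcases hc with rfl | hc
        exacts [hb, hSm c hc]
      exact SimpleGraph.adj_of_le_prefixDegree ha hm hadeg hcm (Ne.symm hac)
  have := hT.card_le_of_isClique hcl
  rw [card_insert_of_notMem (by simpa [hab] using h.1), card_insert_of_notMem h.2, hS] at this
  omega

lemma exists_mem_inter_le_prefixDegree (hT : IsKTreeOrder k H) (hkm : k < m) (hm : m ≤ n)
    (ih : H.CliqueDegreeBound k m) {W : Finset (Fin n)} (hWm : ∀ w ∈ W, (w : ℕ) < m)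
    (hcl : H.IsClique (W : Set (Fin n))) (hcard : m < k + #W) {S : Finset (Fin n)} (hS : #S = k)
    (hSm : ∀ s ∈ S, (s : ℕ) < m) (hScl : H.IsClique (S : Set (Fin n))) :
    ∃ u ∈ W, u ∈ S ∧ m - 1 ≤ H.prefixDegree m u := by
  have hU : 1 < #{w ∈ W | m - 1 ≤ H.prefixDegree m w} := by
    have h1 := ih.card_filter_prefixDegree_lt hkm hWm hcl
    have h2 := card_filter_add_card_filter_not (s := W)
      (fun w => m - 1 ≤ H.prefixDegree m w)
    simp only [not_le] at h2
    omega
  obtain ⟨a, ha, b, hb, hab⟩ := one_lt_card.mp hU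
  simp only [mem_filter] at ha hb
  rcases hT.mem_or_mem_of_le_prefixDegree hm hS hSm hScl hab (hWm a ha.1) (hWm b hb.1) ha.2 hb.2
    with h | h
  exacts [⟨a, ha.1, h, ha.2⟩, ⟨b, hb.1, h, hb.2⟩]

lemma cliqueDegreeBound_base (hT : IsKTreeOrder k H) (hkn : k + 1 ≤ n) :
    H.CliqueDegreeBound k (k + 1) := by
  rintro W ⟨w, hw⟩ hW -
  refine ⟨w, hw, (min_le_right _ _).trans ?_⟩
  rw [← SimpleGraph.card_filter_val_lt_erase (hW w hw) hkn]
  refine SimpleGraph.card_le_prefixDegree fun j hj => ?_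
  obtain ⟨hjw, hj⟩ := mem_erase.mp hj
  simp only [mem_filter, mem_univ, true_and] at hj
  rcases lt_or_gt_of_ne hjw with h | h
  exacts [⟨hj, (hT.adj_of_lt j w h (hW w hw)).symm⟩, ⟨hj, hT.adj_of_lt w j h hj⟩]

lemma cliqueDegreeBound_succ (hT : IsKTreeOrder k H) (hkm : k + 1 ≤ m) (hm : m < n)
    (ih : H.CliqueDegreeBound k m) : H.CliqueDegreeBound k (m + 1) := by
  intro W hne hW hcl
  set v : Fin n := ⟨m, hm⟩
  obtain ⟨S, hS, hSv, hadj, hScl⟩ := hT.exists_parent_clique v hkm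
  have hSm : ∀ s ∈ S, (s : ℕ) < m := hSv
  have hWm : ∀ w ∈ W, w ≠ v → (w : ℕ) < m := fun w hw hwv => by
    have := hW w hw
    have : (w : ℕ) ≠ m := Fin.val_injective.ne hwv
    omega
  by_cases hvW : v ∈ W
  · have hcardW := card_erase_add_one hvW
    rcases (W.erase v).eq_empty_or_nonempty with hWv | hWv
    · refine ⟨v, hvW, ?_⟩
      have := SimpleGraph.card_le_prefixDegree (m := m + 1) (i := v) fun s hs =>
        ⟨(hSm s hs).trans m.lt_succ_self, ((hadj s (hSv s hs)).mpr hs).symm⟩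
      rw [hWv, card_empty] at hcardW
      omega
    · obtain ⟨w, hw, hdeg⟩ := ih (W.erase v) hWv
        (fun w hw => hWm w (mem_of_mem_erase hw) (ne_of_mem_erase hw))
        (hcl.subset (coe_subset.mpr (erase_subset _ _)))
      have := SimpleGraph.prefixDegree_succ_of_adj hm
        (hcl (mem_of_mem_erase hw) hvW (ne_of_mem_erase hw))
      exact ⟨w, mem_of_mem_erase hw, by omega⟩
  · replace hWm : ∀ w ∈ W, (w : ℕ) < m := fun w hw => hWm w hw (ne_of_mem_of_not_mem hw hvW)
    by_cases hsmall : k + #W ≤ m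
    · obtain ⟨w, hw, hdeg⟩ := ih W hne hWm hcl
      have := SimpleGraph.prefixDegree_mono (H := H) (Nat.le_add_right m 1) w
      exact ⟨w, hw, by omega⟩
    -- `W` is too big for the bound below `m`; a member of `W` in `S` sees all of `[0, m]`.
    · obtain ⟨u, hu, huS, hudeg⟩ := hT.exists_mem_inter_le_prefixDegree hkm hm.le ih hWm hcl
        (by omega) hS hSm hScl
      have := SimpleGraph.prefixDegree_succ_of_adj hm ((hadj u (hSv u huS)).mpr huS)
      exact ⟨u, hu, by omega⟩

lemma cliqueDegreeBound (hT : IsKTreeOrder k H) (hkm : k + 1 ≤ m) (hmn : m ≤ n) :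
    H.CliqueDegreeBound k m := by
  induction m, hkm using Nat.le_induction with
  | base => exact hT.cliqueDegreeBound_base hmn
  | succ m hkm ih => exact hT.cliqueDegreeBound_succ hkm hmn (ih (by omega))

end IsKTreeOrder

lemma degN_eq_prefixDegree_comap {V : Type*} (G : SimpleGraph V) [DecidableRel G.Adj]
    (e : V ≃ Fin n) (x : V) : degN G x = (G.comap e.symm).prefixDegree n (e x) := by
  rw [degN, ← Set.ncard_image_of_injective _ e.injective, SimpleGraph.prefixDegree,
    ← Set.ncard_coe_finset]
  congr 1
  ext j
  simp [Equiv.image_eq_preimage_symm]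

theorem IsKTree.exists_min_le_degN {V : Type*} [Fintype V] {G : SimpleGraph V}
    [DecidableRel G.Adj] (hG : IsKTree k G) {W : Finset V} (hne : W.Nonempty)
    (hcl : G.IsClique (W : Set V)) :
    ∃ w ∈ W, min (k + #W - 1) (Fintype.card V - 1) ≤ degN G w := by
  obtain ⟨n, e, hkn, hT⟩ := hG.exists_isKTreeOrder
  have hcl' : (G.comap e.symm).IsClique (W.map e.toEmbedding : Set (Fin n)) := by
    rw [coe_map]
    rintro _ ⟨a, ha, rfl⟩ _ ⟨b, hb, rfl⟩ hab
    simpa using hcl ha hb (ne_of_apply_ne _ hab)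
  obtain ⟨_, hmem, hdeg⟩ := hT.cliqueDegreeBound hkn le_rfl _ hne.map (fun w _ => w.isLt) hcl'
  obtain ⟨w, hw, rfl⟩ := mem_map.mp hmem
  refine ⟨w, hw, ?_⟩
  rw [degN_eq_prefixDegree_comap G e, Fintype.card_congr e, Fintype.card_fin]
  simpa using hdeg

theorem IsKTree.min_le_degN_of_monotone {V : Type*} [Fintype V] {G : SimpleGraph V}
    (hG : IsKTree k G) {q : ℕ} {u : Fin q → V} (hinj : Function.Injective u)
    (hu : G.IsClique (Set.range u)) (hmono : Monotone fun i => degN G (u i)) (i : Fin q) :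
    min (k + i) (Fintype.card V - 1) ≤ degN G (u i) := by
  classical
  obtain ⟨_, hmem, hdeg⟩ := hG.exists_min_le_degN (W := (Iic i).image u)
    ⟨u i, mem_image_of_mem u (mem_Iic.mpr le_rfl)⟩
    (hu.subset (by simp))
  obtain ⟨j, hj, rfl⟩ := mem_image.mp hmem
  rw [card_image_of_injective _ hinj, Fin.card_Iic] at hdeg
  exact le_trans (by omega) (hdeg.trans (hmono (mem_Iic.mp hj)))

/-- Indices are 0-based: `u i` is the vertex `u_{i+1}` of the informal statement. -/
theorem stmt7 {V : Type*} [Fintype V] (k q : ℕ) (G : SimpleGraph V)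
    (hG : IsKTree k G)
    (u : Fin q → V) (hinj : Function.Injective u)
    (hclique : ∀ i j : Fin q, i ≠ j → G.Adj (u i) (u j))
    (hord : ∀ i j : Fin q, i ≤ j → degN G (u i) ≤ degN G (u j)) :
    (k + q ≤ Fintype.card V → ∀ i : Fin q, k + (i : ℕ) ≤ degN G (u i)) ∧
    (Fintype.card V ≤ k + q - 1 →
      ∀ i : Fin q,
        ((i : ℕ) + 1 + k + 1 ≤ Fintype.card V → k + (i : ℕ) ≤ degN G (u i)) ∧
        (Fintype.card V ≤ (i : ℕ) + 1 + k → Fintype.card V - 1 ≤ degN G (u i))) := by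
  have hu : G.IsClique (Set.range u) := by
    rintro _ ⟨a, rfl⟩ _ ⟨b, rfl⟩ hab
    exact hclique a b (ne_of_apply_ne u hab)
  have hdeg := hG.min_le_degN_of_monotone hinj hu hord
  refine ⟨fun _ i => ?_, fun _ i => ⟨fun _ => ?_, fun _ => ?_⟩⟩ <;>
    have := hdeg i <;> have := i.isLt <;> omega
end

section
/- For all integers k ≥ 1 and d ≥ 2k-1 such that 2(d-2k+1) ≡ 0 (mod k(k+1)), there are infinitely many values of n for which there exists a k-tree G on n vertices such that for every t with 0 ≤ t < k, every degree-d t-set S of G satisfies |S| ≤ ((d-2k+1)/(d-(3/2)k+1))·((t+1)/(k+1))·n + ((k-1)(t+1)(d-2k+1) + k(t+1)(k+1)) / ((d-(3/2)k+1)(k+1)). -/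
/-! The graph is a spine, the `k`-th power of a path on `m` vertices, with `(k + 1)`-clique
gadgets glued onto its windows of `k` consecutive vertices. A gadget on a window gives the
window's vertices `1, 2, …, k` neighbours, so `M` gadgets per window, where
`M k (k + 1) / 2 = d - 2k + 1`, give every interior spine vertex degree exactly `d + 1`; the
`M (k - 1) + 1` extra gadgets at each end (reversed at the left end) make up the deficit near
the ends. Hence a set of vertices of degree at most `d` lies in the gadgets, and if it induces
treewidth at most `t` it meets each gadget in at most `t + 1` vertices, because a clique of a
`t`-tree has at most `t + 1` vertices. Counting gadgets gives the bound exactly. -/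

open Finset

theorem IsKTree.card_le_of_isClique {V : Type*} {k : ℕ} {H : SimpleGraph V} (hH : IsKTree k H)
    {C : Finset V} (hC : H.IsClique (C : Set V)) : C.card ≤ k + 1 := by
  classical
  obtain ⟨n, e, -, -, hlater⟩ := hH
  rcases C.eq_empty_or_nonempty with rfl | hne
  · simp
  set C' := C.map e.toEmbedding
  have hC' : C'.card = C.card := card_map _
  set j := C'.max' hne.map
  have hj : j ∈ C' := max'_mem _ _
  have hle : ∀ i ∈ C', i ≤ j := fun i hi => le_max' _ i hi
  rcases lt_or_ge (j : ℕ) (k + 1) with hjk | hjk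
  · calc C.card = C'.card := hC'.symm
      _ ≤ (Iic j).card := card_le_card fun i hi => mem_Iic.2 (hle i hi)
      _ ≤ k + 1 := by rw [Fin.card_Iic]; omega
  · -- the rest of `C` lies among the `k` earlier neighbours of its last vertex `j`
    obtain ⟨S, hS, -, hadj, -⟩ := hlater j hjk
    have hsub : C'.erase j ⊆ S := by
      intro i hi
      have hij := ne_of_mem_erase hi
      have hi : i ∈ C' := mem_of_mem_erase hi
      refine (hadj i (lt_of_le_of_ne (hle i hi) hij)).1 (hC ?_ ?_ ?_)
      · simpa [C'] using hi
      · simpa [C'] using hj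
      · simpa using hij
    have := card_le_card hsub
    rw [card_erase_of_mem hj] at this
    omega

theorem isKTree_top_s11 {V : Type*} {k : ℕ} (e : V ≃ Fin (k + 1)) :
    IsKTree k (⊤ : SimpleGraph V) :=
  ⟨k + 1, e, le_rfl, fun i j hij _ => by simpa using hij.ne,
    fun j hj => absurd j.2 (by omega)⟩

theorem card_le_of_isClique_of_treewidth_le {V : Type*} [Finite V] {G : SimpleGraph V} {t : ℕ}
    (ht : treewidth G ≤ t) {C : Finset V} (hC : G.IsClique (C : Set V)) : C.card ≤ t + 1 := by
  rcases isEmpty_or_nonempty V with hV | hV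
  · simp [Finset.eq_empty_of_isEmpty C]
  obtain ⟨c, hc⟩ : ∃ c, Nat.card V = c + 1 := Nat.exists_eq_succ_of_ne_zero Nat.card_pos.ne'
  -- the complete graph is a `c`-tree, so the infimum defining `treewidth G` is attained
  have hne : {k | ∃ H : SimpleGraph V, IsKTree k H ∧ G ≤ H}.Nonempty :=
    ⟨c, ⊤, isKTree_top_s11 (Finite.equivFinOfCardEq hc), le_top⟩
  obtain ⟨H, hH, hGH⟩ := Nat.sInf_mem hne
  exact (hH.card_le_of_isClique (hC.mono hGH)).trans (Nat.succ_le_succ ht)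

theorem card_le_of_isClique_of_treewidth_induce_le {V : Type*} {G : SimpleGraph V} {S : Finset V}
    {t : ℕ} (ht : treewidth (G.induce (S : Set V)) ≤ t) {C : Finset V} (hCS : C ⊆ S)
    (hC : G.IsClique (C : Set V)) : C.card ≤ t + 1 := by
  classical
  have hcard : (C.subtype (· ∈ (S : Set V))).card = C.card := by
    rw [card_subtype, filter_true_of_mem fun x hx => mem_coe.2 (hCS hx)]
  rw [← hcard]
  exact card_le_of_isClique_of_treewidth_le ht fun x hx y hy hxy =>
    hC (mem_subtype.1 hx) (mem_subtype.1 hy) (Subtype.coe_ne_coe.2 hxy)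

theorem isKTree_comap_val_of_earlierNeighbors {H : SimpleGraph ℕ} {k n : ℕ} (hn : k + 1 ≤ n)
    (hpred : ∀ j < n, ∃ S : Finset ℕ, S.card = min j k ∧ H.IsClique (S : Set ℕ) ∧
      ∀ i, i ∈ S ↔ i < j ∧ H.Adj i j) :
    IsKTree k (H.comap (Fin.val : Fin n → ℕ)) := by
  refine ⟨n, Equiv.refl _, hn, fun i j hij hjk => ?_, fun j hjk => ?_⟩
  · obtain ⟨S, hcard, -, hS⟩ := hpred j j.2
    have : S = range j :=
      eq_of_subset_of_card_le (fun i hi => mem_range.2 ((hS i).1 hi).1) (by simp; omega)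
    exact ((hS i).1 (this ▸ mem_range.2 hij)).2
  · obtain ⟨S, hcard, hclique, hS⟩ := hpred j j.2
    have hlt : ∀ i ∈ S, i < n := fun i hi => ((hS i).1 hi).1.trans j.2
    refine ⟨S.attachFin hlt, by simp [hcard]; omega, fun i hi => ?_, fun i hij => ?_,
      fun i hi i' hi' hii' => ?_⟩
    · exact ((hS i).1 (mem_attachFin _ |>.1 hi)).1
    · rw [mem_attachFin, hS]
      exact ⟨fun h => ⟨hij, h⟩, And.right⟩
    · exact hclique (mem_attachFin _ |>.1 hi) (mem_attachFin _ |>.1 hi') (Fin.val_ne_of_ne hii')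

theorem card_le_degN_comap_val {H : SimpleGraph ℕ} {n : ℕ} (v : Fin n) {F : Finset ℕ}
    (hF : ∀ x ∈ F, x < n ∧ H.Adj v x) :
    F.card ≤ degN (H.comap (Fin.val : Fin n → ℕ)) v := by
  have hlt : ∀ x ∈ F, x < n := fun x hx => (hF x hx).1
  calc F.card = ((F.attachFin hlt : Finset (Fin n)) : Set (Fin n)).ncard := by
        rw [Set.ncard_coe_finset, card_attachFin]
    _ ≤ degN (H.comap Fin.val) v :=
        Set.ncard_le_ncard (fun x hx => (hF x (mem_attachFin _ |>.1 hx)).2) (Set.toFinite _)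

theorem sum_range_mul_comp_div {β : Type*} [AddCommMonoid β] (f : ℕ → β) (W M : ℕ) :
    ∑ x ∈ range (W * M), f (x / M) = M • ∑ w ∈ range W, f w := by
  induction W with
  | zero => simp
  | succ W ih =>
    rw [Nat.succ_mul, sum_range_add, ih, sum_range_succ, smul_add]
    congr 1
    calc ∑ x ∈ range M, f ((W * M + x) / M) = ∑ _x ∈ range M, f W :=
          sum_congr rfl fun x hx => congrArg f <| by
            rw [mem_range] at hx
            rw [Nat.div_eq_iff (by omega)]
            omega
      _ = M • f W := by simp

theorem two_mul_sum_Ico_succ_add {a b : ℕ} (hab : a ≤ b) :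
    2 * ∑ i ∈ Ico a b, (i + 1) + a * (a + 1) = b * (b + 1) := by
  induction b, hab using Nat.le_induction with
  | base => simp
  | succ b hab ih => rw [sum_Ico_succ_top hab]; linarith

namespace GadgetKTree

/-! Vertices `0, …, m - 1` form the spine, the `k`-th power of a path; vertex
`m + g * (k + 1) + j` (with `j ≤ k`) is the `j`-th vertex of gadget `g`, a `(k + 1)`-clique.
Gadget vertex `j` is joined to the spine vertices `attach k M m g j`, a `(k - j)`-subset of a
spine window `[b, b + k)`. The first `endCount k M` gadgets hang on `[0, k)` in reversed order,
the next `endCount k M` on the last window `[m - k, m)`, and then `M` gadgets on each window. -/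

def endCount (k M : ℕ) : ℕ := M * (k - 1) + 1

def numGadgets (k M m : ℕ) : ℕ := 2 * endCount k M + (m - k + 1) * M

def numVertices (k M m : ℕ) : ℕ := m + numGadgets k M m * (k + 1)

def window (k M m g : ℕ) : ℕ :=
  if g < 2 * endCount k M then m - k else (g - 2 * endCount k M) / M

def attach (k M m g j : ℕ) : Finset ℕ :=
  if g < endCount k M then range (k - j) else Ico (window k M m g + j) (window k M m g + k)

def adjRel (k M m x y : ℕ) : Prop :=
  (y < m ∧ x < y ∧ y ≤ x + k) ∨
  (m ≤ x ∧ m ≤ y ∧ (x - m) / (k + 1) = (y - m) / (k + 1)) ∨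
  (x < m ∧ m ≤ y ∧ x ∈ attach k M m ((y - m) / (k + 1)) ((y - m) % (k + 1)))

def natGraph (k M m : ℕ) : SimpleGraph ℕ := SimpleGraph.fromRel (adjRel k M m)

def graph (k M m : ℕ) : SimpleGraph (Fin (numVertices k M m)) :=
  (natGraph k M m).comap Fin.val

variable {k M m : ℕ}

theorem natGraph_adj_of_lt_of_lt {a b : ℕ} (ha : a < m) (hb : b < m) :
    (natGraph k M m).Adj a b ↔ a ≠ b ∧ a ≤ b + k ∧ b ≤ a + k := by
  simp only [natGraph, SimpleGraph.fromRel_adj, adjRel]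
  omega

theorem natGraph_adj_of_le_of_le {a b : ℕ} (ha : m ≤ a) (hb : m ≤ b) :
    (natGraph k M m).Adj a b ↔ a ≠ b ∧ (a - m) / (k + 1) = (b - m) / (k + 1) := by
  simp only [natGraph, SimpleGraph.fromRel_adj, adjRel]
  constructor
  · rintro ⟨hab, h | h⟩ <;> refine ⟨hab, ?_⟩ <;> omega
  · rintro ⟨hab, h⟩
    exact ⟨hab, Or.inl (Or.inr (Or.inl ⟨ha, hb, h⟩))⟩

theorem natGraph_adj_of_lt_of_le {a b : ℕ} (ha : a < m) (hb : m ≤ b) :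
    (natGraph k M m).Adj a b ↔ a ∈ attach k M m ((b - m) / (k + 1)) ((b - m) % (k + 1)) := by
  simp only [natGraph, SimpleGraph.fromRel_adj, adjRel]
  constructor
  · rintro ⟨-, (h | h | h) | (h | h | h)⟩ <;> first | exact h.2.2 | omega
  · intro h
    exact ⟨by omega, Or.inl (Or.inr (Or.inr ⟨ha, hb, h⟩))⟩

theorem window_add_le (hkm : k ≤ m) {g : ℕ} (hg : g < numGadgets k M m) :
    window k M m g + k ≤ m := by
  unfold window
  split_ifs with h
  · omega
  · have : (g - 2 * endCount k M) / M < m - k + 1 :=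
      Nat.div_lt_of_lt_mul (by rw [mul_comm M]; unfold numGadgets at hg; omega)
    omega

theorem exists_attach_subset (hkm : k ≤ m) {g : ℕ} (hg : g < numGadgets k M m) :
    ∃ b, b + k ≤ m ∧ ∀ j, attach k M m g j ⊆ Ico b (b + k) := by
  have := window_add_le hkm hg
  unfold attach
  split_ifs
  · exact ⟨0, by omega, fun j i hi => by simp at hi ⊢; omega⟩
  · exact ⟨window k M m g, this, fun j i hi => by simp at hi ⊢; omega⟩

theorem card_attach (g j : ℕ) : (attach k M m g j).card = k - j := by
  unfold attach
  split_ifs <;> simp; omega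

theorem attach_antitone {g j j' : ℕ} (h : j ≤ j') : attach k M m g j' ⊆ attach k M m g j := by
  unfold attach
  split_ifs <;> intro i hi <;> simp at hi ⊢ <;> omega

theorem div_mod_eq_of_mem_block {g y : ℕ} (h₁ : m + g * (k + 1) ≤ y)
    (h₂ : y ≤ m + g * (k + 1) + k) :
    (y - m) / (k + 1) = g ∧ (y - m) % (k + 1) = y - (m + g * (k + 1)) := by
  have hdiv : (y - m) / (k + 1) = g := by rw [Nat.div_eq_iff (by omega)]; omega
  have := Nat.div_add_mod' (y - m) (k + 1)
  rw [hdiv] at this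
  exact ⟨hdiv, by omega⟩

theorem div_mod_eq_of_gadget_vertex {g j : ℕ} (hj : j ≤ k) :
    (m + g * (k + 1) + j - m) / (k + 1) = g ∧ (m + g * (k + 1) + j - m) % (k + 1) = j := by
  obtain ⟨hdiv, hmod⟩ := div_mod_eq_of_mem_block (k := k) (m := m) (g := g)
    (y := m + g * (k + 1) + j) (by omega) (by omega)
  exact ⟨hdiv, by omega⟩

theorem exists_earlierNeighbors_spine {x : ℕ} (hx : x < m) :
    ∃ S : Finset ℕ, S.card = min x k ∧ (natGraph k M m).IsClique (S : Set ℕ) ∧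
      ∀ i, i ∈ S ↔ i < x ∧ (natGraph k M m).Adj i x := by
  refine ⟨Ico (x - k) x, by simp; omega, fun a ha b hb hab => ?_, fun i => ?_⟩
  · simp only [coe_Ico, Set.mem_Ico] at ha hb
    exact (natGraph_adj_of_lt_of_lt (by omega) (by omega)).2 ⟨hab, by omega, by omega⟩
  · rw [mem_Ico]
    constructor
    · exact fun hi =>
        ⟨hi.2, (natGraph_adj_of_lt_of_lt (by omega) hx).2 ⟨by omega, by omega, by omega⟩⟩
    · rintro ⟨hi, hadj⟩
      have := (natGraph_adj_of_lt_of_lt (by omega) hx).1 hadj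
      omega

theorem isClique_attach_union_Ico (hkm : k ≤ m) {g j : ℕ} (hg : g < numGadgets k M m)
    (hj : j ≤ k) :
    (natGraph k M m).IsClique
      ((attach k M m g j ∪ Ico (m + g * (k + 1)) (m + g * (k + 1) + j) : Finset ℕ) :
        Set ℕ) := by
  obtain ⟨b, hbm, hb⟩ := exists_attach_subset hkm hg
  have hcross : ∀ a ∈ attach k M m g j, ∀ c ∈ Ico (m + g * (k + 1)) (m + g * (k + 1) + j),
      (natGraph k M m).Adj a c := fun a ha c hc => by
    rw [mem_Ico] at hc
    obtain ⟨hdiv, hmod⟩ := div_mod_eq_of_mem_block hc.1 (by omega)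
    have := mem_Ico.1 (hb j ha)
    rw [natGraph_adj_of_lt_of_le (by omega) (by omega), hdiv, hmod]
    exact attach_antitone (by omega) ha
  intro a ha c hc hac
  simp only [coe_union, coe_Ico, Set.mem_union, mem_coe, Set.mem_Ico] at ha hc
  rcases ha with ha | ha <;> rcases hc with hc | hc
  · have := mem_Ico.1 (hb j ha)
    have := mem_Ico.1 (hb j hc)
    exact (natGraph_adj_of_lt_of_lt (by omega) (by omega)).2 ⟨hac, by omega, by omega⟩
  · exact hcross a ha c (mem_Ico.2 hc)
  · exact (hcross c hc a (mem_Ico.2 ha)).symm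
  · exact (natGraph_adj_of_le_of_le (by omega) (by omega)).2 ⟨hac,
      (div_mod_eq_of_mem_block ha.1 (by omega)).1.trans
        (div_mod_eq_of_mem_block hc.1 (by omega)).1.symm⟩

theorem exists_earlierNeighbors_gadget (hkm : k ≤ m) {g j : ℕ} (hg : g < numGadgets k M m)
    (hj : j ≤ k) :
    ∃ S : Finset ℕ, S.card = min (m + g * (k + 1) + j) k ∧
      (natGraph k M m).IsClique (S : Set ℕ) ∧
      ∀ i, i ∈ S ↔
        i < m + g * (k + 1) + j ∧ (natGraph k M m).Adj i (m + g * (k + 1) + j) := by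
  obtain ⟨b, hbm, hb⟩ := exists_attach_subset hkm hg
  have hspine : ∀ i ∈ attach k M m g j, i < m := fun i hi => by
    have := mem_Ico.1 (hb j hi); omega
  obtain ⟨hdiv, hmod⟩ := div_mod_eq_of_gadget_vertex (k := k) (m := m) (g := g) hj
  refine ⟨_, ?_, isClique_attach_union_Ico hkm hg hj, fun i => ?_⟩
  · rw [card_union_of_disjoint, card_attach, Nat.card_Ico]
    · omega
    · exact disjoint_left.2 fun i hi hi' => by have := hspine i hi; simp at hi'; omega
  · rw [mem_union, mem_Ico]
    rcases lt_or_ge i m with him | him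
    · rw [natGraph_adj_of_lt_of_le him (by omega), hdiv, hmod]
      constructor
      · rintro (h | h)
        · exact ⟨by omega, h⟩
        · omega
      · exact fun h => Or.inl h.2
    · rw [natGraph_adj_of_le_of_le him (by omega), hdiv]
      constructor
      · rintro (h | h)
        · have := hspine i h; omega
        · exact ⟨h.2, by omega, (div_mod_eq_of_mem_block h.1 (by omega)).1⟩
      · rintro ⟨hlt, -, hblock⟩
        rw [Nat.div_eq_iff (by omega)] at hblock
        right
        omega

theorem gadget_vertex_lt {g j : ℕ} (hg : g < numGadgets k M m) (hj : j ≤ k) :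
    m + g * (k + 1) + j < numVertices k M m := by
  have : (g + 1) * (k + 1) ≤ numGadgets k M m * (k + 1) := Nat.mul_le_mul_right _ hg
  unfold numVertices
  linarith

theorem isKTree_graph (hkm : k ≤ m) : IsKTree k (graph k M m) := by
  refine isKTree_comap_val_of_earlierNeighbors ?_ fun x hx => ?_
  · have : 0 < numGadgets k M m := by unfold numGadgets endCount; omega
    have := gadget_vertex_lt (m := m) this le_rfl
    omega
  rcases lt_or_ge x m with hxm | hxm
  · exact exists_earlierNeighbors_spine hxm
  have hdecomp := Nat.div_add_mod' (x - m) (k + 1)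
  have hj := Nat.mod_lt (x - m) k.succ_pos
  have hg : (x - m) / (k + 1) < numGadgets k M m :=
    Nat.div_lt_of_lt_mul (by unfold numVertices at hx; rw [mul_comm]; omega)
  have := exists_earlierNeighbors_gadget (M := M) hkm hg (Nat.lt_succ_iff.1 hj)
  rwa [show m + (x - m) / (k + 1) * (k + 1) + (x - m) % (k + 1) = x by omega] at this

def windowCount (k w s : ℕ) : ℕ := if w ≤ s ∧ s < w + k then s - w + 1 else 0

def spineDegree (k M m s : ℕ) : ℕ :=
  min s k + min (m - 1 - s) k + (endCount k M * (k - s) + endCount k M * windowCount k (m - k) s +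
    M * ∑ w ∈ range (m - k + 1), windowCount k w s)

theorem card_filter_mem_attach (g s : ℕ) :
    ((range (k + 1)).filter (fun j => s ∈ attach k M m g j)).card =
      if g < endCount k M then k - s else windowCount k (window k M m g) s := by
  unfold attach windowCount
  split_ifs with hg hs
  · rw [← card_range (k - s)]
    congr 1; ext j; simp; omega
  · rw [← card_range (s - window k M m g + 1)]
    congr 1; ext j; simp; omega
  · rw [card_eq_zero, filter_eq_empty_iff]
    simp; omega

theorem sum_card_filter_mem_attach (s : ℕ) :
    ∑ g ∈ range (numGadgets k M m),
        ((range (k + 1)).filter (fun j => s ∈ attach k M m g j)).card =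
      endCount k M * (k - s) + endCount k M * windowCount k (m - k) s +
        M * ∑ w ∈ range (m - k + 1), windowCount k w s := by
  simp_rw [card_filter_mem_attach]
  rw [numGadgets, two_mul, add_assoc, sum_range_add, sum_range_add, ← smul_eq_mul M,
    ← sum_range_mul_comp_div, add_assoc]
  congr 1
  · rw [sum_congr rfl fun g hg => if_pos (mem_range.1 hg), sum_const, card_range, smul_eq_mul]
  congr 1
  · rw [sum_congr rfl fun g hg => ?_, sum_const, card_range, smul_eq_mul]
    rw [mem_range] at hg
    rw [if_neg (by omega), window, if_pos (by omega)]
  · refine sum_congr rfl fun g _ => ?_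
    rw [if_neg (by omega), window, if_neg (by omega)]
    congr 2
    omega

theorem spineDegree_le_degN (v : Fin (numVertices k M m)) (hv : (v : ℕ) < m) :
    spineDegree k M m (v : ℕ) ≤ degN (graph k M m) v := by
  set s : ℕ := (v : ℕ)
  set P := (range (numGadgets k M m) ×ˢ range (k + 1)).filter fun p => s ∈ attach k M m p.1 p.2
  have hP : ∀ p ∈ P, p.1 < numGadgets k M m ∧ p.2 ≤ k ∧ s ∈ attach k M m p.1 p.2 :=
    fun p hp => by
      simp only [P, mem_filter, mem_product, mem_range] at hp
      exact ⟨hp.1.1, by omega, hp.2⟩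
  have hinj : Set.InjOn (fun p : ℕ × ℕ => m + p.1 * (k + 1) + p.2) P := fun p hp q hq hpq => by
    have hp' := div_mod_eq_of_gadget_vertex (m := m) (g := p.1) (hP p hp).2.1
    have hq' := div_mod_eq_of_gadget_vertex (m := m) (g := q.1) (hP q hq).2.1
    simp only at hpq
    rw [hpq] at hp'
    exact Prod.ext (hp'.1.symm.trans hq'.1) (hp'.2.symm.trans hq'.2)
  rw [spineDegree, ← sum_card_filter_mem_attach]
  calc _ = ((Ico (s - k) s ∪ Ico (s + 1) (min (s + k + 1) m)) ∪
        P.image fun p => m + p.1 * (k + 1) + p.2).card := by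
        rw [card_union_of_disjoint, card_union_of_disjoint, Nat.card_Ico, Nat.card_Ico,
          card_image_of_injOn hinj]
        · simp only [P, card_filter, sum_product]
          omega
        · exact disjoint_left.2 fun i hi hi' => by simp at hi hi'; omega
        · refine disjoint_left.2 fun i hi hi' => ?_
          obtain ⟨p, -, rfl⟩ := mem_image.1 hi'
          simp only [mem_union, mem_Ico] at hi
          omega
    _ ≤ degN (graph k M m) v := card_le_degN_comap_val v fun x hx => by
        rcases mem_union.1 hx with hx | hx
        · simp only [mem_union, mem_Ico] at hx
          have : m ≤ numVertices k M m := Nat.le_add_right _ _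
          exact ⟨by omega,
            (natGraph_adj_of_lt_of_lt hv (by omega)).2 ⟨by omega, by omega, by omega⟩⟩
        · obtain ⟨p, hp, rfl⟩ := mem_image.1 hx
          obtain ⟨hg, hj, hs⟩ := hP p hp
          refine ⟨gadget_vertex_lt hg hj, ?_⟩
          rwa [natGraph_adj_of_lt_of_le hv (by omega), (div_mod_eq_of_gadget_vertex hj).1,
            (div_mod_eq_of_gadget_vertex hj).2]

theorem sum_Ico_succ_le_sum_windowCount {s a b W : ℕ} (hbk : b ≤ k) (hbs : b ≤ s + 1)
    (hsW : s < W + a) : ∑ i ∈ Ico a b, (i + 1) ≤ ∑ w ∈ range W, windowCount k w s :=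
  calc ∑ i ∈ Ico a b, (i + 1) = ∑ i ∈ Ico a b, windowCount k (s - i) s :=
        sum_congr rfl fun i hi => by
          rw [mem_Ico] at hi
          rw [windowCount, if_pos (by omega)]
          omega
    _ = ∑ w ∈ (Ico a b).image (s - ·), windowCount k w s :=
        (sum_image (f := (windowCount k · s)) (s := Ico a b) (g := (s - ·))
          fun i hi j hj hij => by
          rw [mem_coe, mem_Ico] at hi hj
          simp only at hij
          omega).symm
    _ ≤ ∑ w ∈ range W, windowCount k w s :=
        sum_le_sum_of_subset fun w hw => by
          obtain ⟨i, hi, rfl⟩ := mem_image.1 hw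
          rw [mem_Ico] at hi
          rw [mem_range]
          omega

theorem succ_le_spineDegree {d : ℕ} (hm : 2 * k ≤ m) (hd : 2 * k ≤ d + 1)
    (hM : 2 * (d + 1 - 2 * k) = k * (k + 1) * M) {s : ℕ} (hs : s < m) :
    d + 1 ≤ spineDegree k M m s := by
  have hd' : 2 * (d + 1) = k * (k + 1) * M + 4 * k := by omega
  rw [spineDegree, endCount]
  rcases lt_or_ge s k with hsk | hks
  · have hsum := sum_Ico_succ_le_sum_windowCount (k := k) (s := s) (W := m - k + 1) (a := 0)
      (b := s + 1) (by omega) le_rfl (by omega)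
    have hgauss := two_mul_sum_Ico_succ_add (Nat.zero_le (s + 1))
    obtain ⟨e, rfl⟩ : ∃ e, k = s + e + 1 := ⟨k - s - 1, by omega⟩
    rw [windowCount, if_neg (by omega), min_eq_left (by omega), min_eq_right (by omega),
      show s + e + 1 - 1 = s + e by omega, show s + e + 1 - s = e + 1 by omega]
    nlinarith [Nat.mul_le_mul_left M hsum, Nat.mul_le_mul_left M (Nat.le_mul_self e)]
  rcases lt_or_ge s (m - k) with hsm | hms
  · have hsum := sum_Ico_succ_le_sum_windowCount (k := k) (s := s) (W := m - k + 1) (a := 0)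
      (b := k) le_rfl (by omega) (by omega)
    have hgauss := two_mul_sum_Ico_succ_add (Nat.zero_le k)
    rw [windowCount, if_neg (by omega), min_eq_right hks, min_eq_right (by omega),
      Nat.sub_eq_zero_of_le hks]
    nlinarith [Nat.mul_le_mul_left M hsum]
  · obtain ⟨a, rfl⟩ := Nat.exists_eq_add_of_le hms
    have hsum := sum_Ico_succ_le_sum_windowCount (k := k) (s := m - k + a) (W := m - k + 1)
      (a := a) (b := k) le_rfl (by omega) (by omega)
    have hgauss := two_mul_sum_Ico_succ_add (show a ≤ k by omega)
    obtain ⟨c, hc⟩ : ∃ c, k = a + c + 1 := ⟨k - a - 1, by omega⟩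
    rw [windowCount, if_pos (by omega), min_eq_right (by omega), min_eq_left (by omega),
      Nat.sub_eq_zero_of_le (by omega : k ≤ m - k + a),
      show m - k + a - (m - k) + 1 = a + 1 by omega,
      show m - 1 - (m - k + a) = c by omega, show k - 1 = a + c by omega]
    subst hc
    nlinarith [Nat.mul_le_mul_left M hsum, Nat.zero_le (M * ((a + 1) * (a + 2 * c)))]

theorem card_le_of_degN_le_of_treewidth_le {d t : ℕ} (hm : 2 * k ≤ m) (hd : 2 * k ≤ d + 1)
    (hM : 2 * (d + 1 - 2 * k) = k * (k + 1) * M)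
    {S : Finset (Fin (numVertices k M m))} (hdeg : ∀ v ∈ S, degN (graph k M m) v ≤ d)
    (htw : treewidth ((graph k M m).induce (S : Set (Fin (numVertices k M m)))) ≤ t) :
    S.card ≤ (t + 1) * numGadgets k M m := by
  classical
  have hgadget : ∀ v ∈ S, m ≤ (v : ℕ) := fun v hv => by
    by_contra! hvm
    have := (succ_le_spineDegree hm hd hM hvm).trans (spineDegree_le_degN v hvm)
    have := hdeg v hv
    omega
  have hblock : ∀ v ∈ S, ((v : ℕ) - m) / (k + 1) < numGadgets k M m := fun v hv =>
    Nat.div_lt_of_lt_mul <| by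
      have := hgadget v hv
      have := v.2
      unfold numVertices at this
      rw [mul_comm]
      omega
  simpa using card_le_mul_card_image_of_maps_to (t := range (numGadgets k M m))
    (fun v hv => mem_range.2 (hblock v hv)) (t + 1) fun g _ =>
      card_le_of_isClique_of_treewidth_induce_le htw (filter_subset _ _) fun x hx y hy hxy => by
        simp only [mem_coe, mem_filter] at hx hy
        exact (natGraph_adj_of_le_of_le (hgadget x hx.1) (hgadget y hy.1)).2
          ⟨Fin.val_ne_of_ne hxy, hx.2.trans hy.2.symm⟩

theorem cast_mul_numGadgets {d : ℕ} (hk : 1 ≤ k) (hkm : k ≤ m) (hd : 2 * k ≤ d + 1)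
    (hM : 2 * (d + 1 - 2 * k) = k * (k + 1) * M) (t : ℕ) :
    (((t + 1) * numGadgets k M m : ℕ) : ℝ) =
      (((d : ℝ) - 2 * k + 1) / ((d : ℝ) - (3 / 2) * k + 1)) * (((t : ℝ) + 1) / (k + 1)) *
          (numVertices k M m : ℕ)
        + (((k : ℝ) - 1) * (t + 1) * ((d : ℝ) - 2 * k + 1) + (k : ℝ) * (t + 1) * (k + 1))
          / ((((d : ℝ) - (3 / 2) * k + 1)) * (k + 1)) := by
  have hdM : (d : ℝ) = 2 * k - 1 + M * k * (k + 1) / 2 := by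
    have : ((2 * (d + 1 - 2 * k) : ℕ) : ℝ) = (k * (k + 1) * M : ℕ) := congrArg _ hM
    push_cast [Nat.cast_sub hd] at this
    linarith
  have hk0 : (k : ℝ) ≠ 0 := by positivity
  have hMk : (M : ℝ) * (k + 1) + 1 ≠ 0 := by positivity
  rw [show (d : ℝ) - 2 * k + 1 = M * k * (k + 1) / 2 by rw [hdM]; ring,
    show (d : ℝ) - (3 / 2) * k + 1 = k * (M * (k + 1) + 1) / 2 by rw [hdM]; ring]
  simp only [numVertices, numGadgets, endCount]
  push_cast [Nat.cast_sub hk, Nat.cast_sub hkm]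
  field_simp
  ring

end GadgetKTree

open GadgetKTree in
/-- For all integers `k ≥ 1` and `d ≥ 2k-1` with
`2(d-2k+1) ≡ 0 (mod k(k+1))`, there are infinitely many `n` for which there exists a `k`-tree
`G` on `n` vertices such that for every `0 ≤ t < k`, every degree-`d` `t`-set `S` of `G`
satisfies
`|S| ≤ ((d-2k+1)/(d-(3/2)k+1))·((t+1)/(k+1))·n
      + ((k-1)(t+1)(d-2k+1) + k(t+1)(k+1)) / ((d-(3/2)k+1)(k+1))`. -/
theorem stmt11 (k d : ℕ) (hk : 1 ≤ k) (hd : 2 * k ≤ d + 1)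
    (hdvd : k * (k + 1) ∣ 2 * (d + 1 - 2 * k)) :
    {n : ℕ | ∃ G : SimpleGraph (Fin n), IsKTree k G ∧
      ∀ t : ℕ, t < k → ∀ S : Finset (Fin n),
        (∀ v ∈ S, degN G v ≤ d) →
        treewidth (G.induce (S : Set (Fin n))) ≤ t →
        (S.card : ℝ) ≤
          (((d : ℝ) - 2 * k + 1) / ((d : ℝ) - (3 / 2) * k + 1)) * (((t : ℝ) + 1) / (k + 1)) * n
            + (((k : ℝ) - 1) * (t + 1) * ((d : ℝ) - 2 * k + 1) + (k : ℝ) * (t + 1) * (k + 1))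
                / ((((d : ℝ) - (3 / 2) * k + 1)) * (k + 1))}.Infinite := by
  obtain ⟨M, hM⟩ := hdvd
  refine Set.infinite_of_forall_exists_gt fun a => ⟨numVertices k M (2 * k + a + 1),
    ⟨graph k M _, isKTree_graph (by omega), fun t _ S hdeg htw => ?_⟩, by unfold numVertices; omega⟩
  calc (S.card : ℝ) ≤ ((t + 1) * numGadgets k M (2 * k + a + 1) : ℕ) := by
        exact_mod_cast card_le_of_degN_le_of_treewidth_le (by omega) hd hM hdeg htw
    _ = _ := cast_mul_numGadgets hk (by omega) hd hM t
end
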